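/- Almost every α ∈ ℝⁿ (with respect to Lebesgue measure) satisfies μ_{n,ℓ}(α) = n, for each pair of integers 1 ≤ ℓ ≤ n. -/

import Mathlib

open Finset MeasureTheory

/-- Distance to the nearest integer. -/
noncomputable def dnint (r : ℝ) : ℝ := |r - round r|

/-- Height of an integer vector: maximum of absolute values of coordinates. -/
def Hgt {n : ℕ} (x : Fin n → ℤ) : ℕ := Finset.univ.sup fun i => (x i).natAbs

/-- The cone condition: the height is attained among the first `ℓ` coordinates. -/
def cone {n : ℕ} (ℓ : ℕ) (x : Fin n → ℤ) : Prop :=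
  ((Finset.univ.filter fun i : Fin n => ℓ ≤ (i : ℕ)).sup fun i => (x i).natAbs) <
  ((Finset.univ.filter fun i : Fin n => (i : ℕ) < ℓ).sup fun i => (x i).natAbs)

/-- The restricted Diophantine exponent `μ_{n,ℓ}(α)`. -/
noncomputable def mu (n ℓ : ℕ) (α : Fin n → ℝ) : ℝ :=
  sSup {m : ℝ | 0 ≤ m ∧ {x : Fin n → ℤ | cone ℓ x ∧
    0 < dnint (∑ i, (x i : ℝ) * α i) ∧
    dnint (∑ i, (x i : ℝ) * α i) ≤ (Hgt x : ℝ) ^ (-m)}.Infinite}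

/-!
For `ν > n`, the set of `α ∈ [0,1]ⁿ` with `‖x·α‖ ≤ H(x)^(-ν)` has measure `O(H(x)^(-ν))`, and
these bounds are summable over `x ∈ ℤⁿ`. By Borel–Cantelli and `ℤⁿ`-periodicity, almost every `α`
has only finitely many such approximations for every `ν > n`; this gives `μ_{n,ℓ}(α) ≤ n`. Such an
`α` satisfies no relation `x·α ∈ ℤ` with `x ≠ 0`, since all multiples of `x` would be solutions.

Conversely, let `m < n`. Dirichlet's pigeonhole argument in the box of side `Q^(q+1)` in the first
`ℓ` coordinates and `Q^q` in the others gives `x ≠ 0` with `‖x·α‖ ≤ Q^(-(ℓ+qn))`. If `x` lies in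
the cone, then `H(x) ≤ Q^(q+1)`, so for large `q` it is a solution with exponent `m`. Otherwise
`H(x) ≤ Q^q`, so it is a solution with exponent `n + ℓ/q > n`, and there are only finitely many of
those. As `Q → ∞`, `‖x·α‖ → 0` with `‖x·α‖ > 0`, so there are infinitely many cone solutions.
-/

open scoped ENNReal
open Set

lemma dnint_nonneg (r : ℝ) : 0 ≤ dnint r := abs_nonneg _

lemma dnint_le_abs_sub (r : ℝ) (k : ℤ) : dnint r ≤ |r - k| := round_le r k

lemma dnint_intCast (k : ℤ) : dnint k = 0 := by simp [dnint]

lemma dnint_add_intCast (r : ℝ) (k : ℤ) : dnint (r + k) = dnint r := by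
  simp [dnint, round_add_intCast]

lemma dnint_neg (r : ℝ) : dnint (-r) = dnint r := by
  have h : ∀ s : ℝ, dnint (-s) ≤ dnint s := fun s =>
    (dnint_le_abs_sub (-s) (-round s)).trans_eq <| by
      rw [dnint, ← abs_neg]; push_cast; ring_nf
  exact le_antisymm (h r) (by simpa using h (-r))

lemma measurable_dnint : Measurable dnint := by
  have : Measurable fun r : ℝ => ((round r : ℤ) : ℝ) := by
    simp_rw [round_eq]
    exact measurable_from_top.comp (Int.measurable_floor.comp (measurable_id.add_const _))
  exact (measurable_id.sub this).abs

lemma natAbs_le_Hgt {n : ℕ} (x : Fin n → ℤ) (i : Fin n) : (x i).natAbs ≤ Hgt x :=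
  Finset.le_sup (f := fun i => (x i).natAbs) (Finset.mem_univ i)

lemma Hgt_le {n : ℕ} {x : Fin n → ℤ} {B : ℕ} (h : ∀ i, (x i).natAbs ≤ B) : Hgt x ≤ B :=
  Finset.sup_le fun i _ => h i

lemma one_le_Hgt {n : ℕ} {x : Fin n → ℤ} (hx : x ≠ 0) : 1 ≤ Hgt x := by
  obtain ⟨i, hi⟩ := Function.ne_iff.1 hx
  exact (Int.natAbs_pos.2 hi).trans_le (natAbs_le_Hgt x i)

lemma norm_intCast_pi_eq_Hgt {n : ℕ} (x : Fin n → ℤ) : ‖fun i => (x i : ℝ)‖ = Hgt x := by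
  refine le_antisymm ((pi_norm_le_iff_of_nonneg (Nat.cast_nonneg _)).2 fun i => ?_) ?_
  · rw [Real.norm_eq_abs, ← Int.cast_abs, Int.abs_eq_natAbs]
    exact_mod_cast natAbs_le_Hgt x i
  · calc (Hgt x : ℝ) ≤ ⌊‖fun i => (x i : ℝ)‖⌋₊ := Nat.cast_le.2 <| Finset.sup_le fun i _ =>
          Nat.le_floor <| by
            simpa [Nat.cast_natAbs] using norm_le_pi_norm (fun i => (x i : ℝ)) i
      _ ≤ _ := Nat.floor_le (norm_nonneg _)

lemma summable_Hgt_rpow_neg {n : ℕ} {ν : ℝ} (hν : n < ν) :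
    Summable fun x : Fin n → ℤ => (Hgt x : ℝ) ^ (-ν) := by
  let L := Submodule.span ℤ (Set.range (Pi.basisFun ℝ (Fin n)))
  have hL : Module.finrank ℤ L = n := by rw [ZLattice.rank ℝ]; simp
  let toL : (Fin n → ℤ) → L := fun x => ⟨fun i => x i, by
    rw [(Pi.basisFun ℝ (Fin n)).mem_span_iff_repr_mem ℤ]; simp⟩
  have htoL : Function.Injective toL := fun x y hxy => by
    ext i; simpa [toL] using congr_fun (congrArg Subtype.val hxy) i
  refine ((ZLattice.summable_norm_rpow L (-ν) (by rw [hL]; linarith)).comp_injective htoL).congr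
    fun x => ?_
  simp [toL, norm_intCast_pi_eq_Hgt]

lemma cone_ne_zero {n ℓ : ℕ} {x : Fin n → ℤ} (h : cone ℓ x) : x ≠ 0 := by
  rintro rfl
  simp [cone] at h

lemma Hgt_le_of_not_cone {n ℓ : ℕ} {x : Fin n → ℤ} (hx : ¬ cone ℓ x) {B : ℕ}
    (h : ∀ i : Fin n, ℓ ≤ (i : ℕ) → (x i).natAbs ≤ B) : Hgt x ≤ B := by
  rw [cone, not_lt] at hx
  refine Hgt_le fun i => ?_
  by_cases hi : ℓ ≤ (i : ℕ)
  · exact h i hi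
  · refine ((Finset.le_sup (f := fun i => (x i).natAbs) ?_).trans hx).trans
      (Finset.sup_le fun j hj => h j (Finset.mem_filter.1 hj).2)
    exact Finset.mem_filter.2 ⟨Finset.mem_univ i, not_le.1 hi⟩

def approxSet {n : ℕ} (α : Fin n → ℝ) (ν : ℝ) : Set (Fin n → ℤ) :=
  {x | x ≠ 0 ∧ dnint (∑ i, (x i : ℝ) * α i) ≤ (Hgt x : ℝ) ^ (-ν)}

def coneApproxSet {n : ℕ} (ℓ : ℕ) (α : Fin n → ℝ) (m : ℝ) : Set (Fin n → ℤ) :=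
  {x | cone ℓ x ∧ 0 < dnint (∑ i, (x i : ℝ) * α i) ∧
    dnint (∑ i, (x i : ℝ) * α i) ≤ (Hgt x : ℝ) ^ (-m)}

lemma mu_eq_sSup_coneApproxSet (n ℓ : ℕ) (α : Fin n → ℝ) :
    mu n ℓ α = sSup {m : ℝ | 0 ≤ m ∧ (coneApproxSet ℓ α m).Infinite} := rfl

lemma approxSet_anti {n : ℕ} (α : Fin n → ℝ) : Antitone (approxSet α) :=
  fun _ _ hνν' _ ⟨hx, hd⟩ => ⟨hx, hd.trans <| Real.rpow_le_rpow_of_exponent_le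
    (by exact_mod_cast one_le_Hgt hx) (neg_le_neg hνν')⟩

lemma coneApproxSet_subset_approxSet {n ℓ : ℕ} (α : Fin n → ℝ) (m : ℝ) :
    coneApproxSet ℓ α m ⊆ approxSet α m :=
  fun _ ⟨hc, _, hd⟩ => ⟨cone_ne_zero hc, hd⟩

lemma approxSet_add_intCast {n : ℕ} (α : Fin n → ℝ) (k : Fin n → ℤ) (ν : ℝ) :
    approxSet (α + fun i => (k i : ℝ)) ν = approxSet α ν := by
  ext x
  have : ∑ i, (x i : ℝ) * (α + fun i => (k i : ℝ)) i =
      ∑ i, (x i : ℝ) * α i + ((∑ i, x i * k i : ℤ) : ℝ) := by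
    push_cast
    simp only [Pi.add_apply, mul_add, Finset.sum_add_distrib]
  simp only [approxSet, mem_ofPred_eq, this, dnint_add_intCast]

lemma dnint_pos_of_finite_approxSet {n : ℕ} {α : Fin n → ℝ} {ν : ℝ}
    (hfin : (approxSet α ν).Finite) {x : Fin n → ℤ} (hx : x ≠ 0) :
    0 < dnint (∑ i, (x i : ℝ) * α i) := by
  refine (dnint_nonneg _).lt_of_ne fun h => Set.not_infinite.2 hfin ?_
  have hint : ∑ i, (x i : ℝ) * α i = round (∑ i, (x i : ℝ) * α i) :=
    sub_eq_zero.1 (abs_eq_zero.1 h.symm)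
  refine infinite_of_injective_forall_mem (f := fun m : ℕ => ((m + 1 : ℕ) : ℤ) • x)
    (fun m m' hmm' => by simpa using smul_left_injective ℤ hx hmm') fun m => ⟨?_, ?_⟩
  · exact smul_ne_zero (by omega) hx
  · have : ∑ i, ((((m + 1 : ℕ) : ℤ) • x) i : ℝ) * α i =
        (((m + 1 : ℕ) * round (∑ i, (x i : ℝ) * α i) : ℤ) : ℝ) := by
      push_cast
      rw [← hint, Finset.mul_sum]
      simp [mul_assoc]
    rw [this, dnint_intCast]
    positivity

instance : IsProbabilityMeasure (volume.restrict (Icc (0 : ℝ) 1)) := ⟨by simp⟩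

lemma volume_Icc_inter_dnint_le_of_pos {a : ℤ} (ha : 0 < a) (c : ℝ) {δ : ℝ} (hδ : 0 ≤ δ)
    (hδ' : δ ≤ 1 / 2) :
    volume (Icc (0 : ℝ) 1 ∩ {t | dnint (a * t + c) ≤ δ}) ≤ ENNReal.ofReal (6 * δ) := by
  have haR : (1 : ℝ) ≤ a := by exact_mod_cast ha
  let I := Finset.Icc ⌈c - δ⌉ ⌊c + a + δ⌋
  have hcover : Icc (0 : ℝ) 1 ∩ {t | dnint (a * t + c) ≤ δ} ⊆
      ⋃ k ∈ I, Icc ((k - δ - c) / a) ((k + δ - c) / a) := by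
    rintro t ⟨⟨ht0, ht1⟩, ht⟩
    have hk := abs_le.1 (show |a * t + c - round (a * t + c)| ≤ δ from ht)
    have hat0 : 0 ≤ (a : ℝ) * t := by positivity
    have hat1 : (a : ℝ) * t ≤ a := mul_le_of_le_one_right (by positivity) ht1
    refine mem_biUnion (x := round (a * t + c)) ?_ ⟨?_, ?_⟩
    · exact Finset.mem_Icc.2 ⟨Int.ceil_le.2 (by linarith), Int.le_floor.2 (by linarith)⟩
    · rw [div_le_iff₀ (by positivity)]; linarith
    · rw [le_div_iff₀ (by positivity)]; linarith
  have hcard : (#I : ℝ) ≤ 3 * a := by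
    have h1 := Int.floor_le (c + a + δ)
    have h2 := Int.le_ceil (c - δ)
    have : (#I : ℤ) ≤ 3 * a := by
      rw [Int.card_Icc, Int.toNat_eq_max]
      refine max_le ?_ (by positivity)
      have : ((⌊c + a + δ⌋ + 1 - ⌈c - δ⌉ : ℤ) : ℝ) ≤ 3 * a := by push_cast; linarith
      exact_mod_cast this
    exact_mod_cast this
  calc volume (Icc (0 : ℝ) 1 ∩ {t | dnint (a * t + c) ≤ δ})
      ≤ ∑ k ∈ I, volume (Icc (((k : ℝ) - δ - c) / a) ((k + δ - c) / a)) :=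
        (measure_mono hcover).trans (measure_biUnion_finset_le I _)
    _ = ∑ _k ∈ I, ENNReal.ofReal (2 * δ / a) := Finset.sum_congr rfl fun k _ => by
        rw [Real.volume_Icc]; congr 1; field_simp; ring
    _ = ENNReal.ofReal (#I * (2 * δ / a)) := by
        rw [Finset.sum_const, nsmul_eq_mul, ENNReal.ofReal_mul (by positivity),
          ENNReal.ofReal_natCast]
    _ ≤ ENNReal.ofReal (6 * δ) := by
        refine ENNReal.ofReal_le_ofReal ?_
        rw [mul_div_assoc', div_le_iff₀ (by positivity)]
        nlinarith

lemma volume_restrict_Icc_dnint_le {a : ℤ} (ha : a ≠ 0) (c : ℝ) {δ : ℝ} (hδ : 0 ≤ δ) :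
    volume.restrict (Icc (0 : ℝ) 1) {t | dnint (a * t + c) ≤ δ} ≤ ENNReal.ofReal (6 * δ) := by
  rcases le_or_gt δ (1 / 2) with hδ' | hδ'
  · rw [Measure.restrict_apply' measurableSet_Icc, inter_comm]
    rcases ha.lt_or_gt with hneg | hpos
    · convert volume_Icc_inter_dnint_le_of_pos (neg_pos.2 hneg) (-c) hδ hδ' using 5 with t
      rw [← dnint_neg]; push_cast; ring_nf
    · exact volume_Icc_inter_dnint_le_of_pos hpos c hδ hδ'
  · exact prob_le_one.trans (ENNReal.one_le_ofReal.2 (by linarith))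

lemma pi_restrict_Icc_dnint_sum_le {n : ℕ} {x : Fin n → ℤ} (hx : x ≠ 0) {δ : ℝ} (hδ : 0 ≤ δ) :
    Measure.pi (fun _ => volume.restrict (Icc (0 : ℝ) 1))
      {α : Fin n → ℝ | dnint (∑ i, (x i : ℝ) * α i) ≤ δ} ≤ ENNReal.ofReal (6 * δ) := by
  obtain ⟨j, hj⟩ := Function.ne_iff.1 hx
  cases n with
  | zero => exact j.elim0
  | succ n =>
  set ρ := volume.restrict (Icc (0 : ℝ) 1)
  let T := {p : ℝ × (Fin n → ℝ) |
    dnint (x j * p.1 + ∑ k, (x (j.succAbove k) : ℝ) * p.2 k) ≤ δ}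
  have hT : MeasurableSet T :=
    measurableSet_le (measurable_dnint.comp (by fun_prop)) measurable_const
  have hpre : {α : Fin (n + 1) → ℝ | dnint (∑ i, (x i : ℝ) * α i) ≤ δ} =
      MeasurableEquiv.piFinSuccAbove (fun _ => ℝ) j ⁻¹' T := by
    ext α
    simp [T, Fin.sum_univ_succAbove _ j, Fin.removeNth_apply]
  rw [hpre, (measurePreserving_piFinSuccAbove (fun _ => ρ) j).measure_preimage
    hT.nullMeasurableSet, Measure.prod_apply_symm hT]
  calc ∫⁻ u, ρ ((fun t => (t, u)) ⁻¹' T) ∂Measure.pi (fun _ => ρ)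
      ≤ ∫⁻ _, ENNReal.ofReal (6 * δ) ∂Measure.pi (fun _ => ρ) :=
        lintegral_mono fun u =>
          volume_restrict_Icc_dnint_le hj (∑ k, (x (j.succAbove k) : ℝ) * u k) hδ
    _ = ENNReal.ofReal (6 * δ) := by simp

lemma ae_restrict_unitCube_finite_approxSet {n : ℕ} {ν : ℝ} (hν : n < ν) :
    ∀ᵐ α ∂volume.restrict (univ.pi fun _ : Fin n => Icc (0 : ℝ) 1),
      (approxSet α ν).Finite := by
  rw [volume_pi, Measure.restrict_pi_pi]
  refine ae_finite_setOfPred_mem (s := fun x => {α | x ∈ approxSet α ν}) ?_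
  have hbound : ∀ x : Fin n → ℤ, Measure.pi (fun _ => volume.restrict (Icc (0 : ℝ) 1))
      {α | x ∈ approxSet α ν} ≤ ENNReal.ofReal (6 * (Hgt x : ℝ) ^ (-ν)) := fun x => by
    by_cases hx : x = 0
    · simp [approxSet, hx]
    · exact (measure_mono fun α hα => hα.2).trans (pi_restrict_Icc_dnint_sum_le hx (by positivity))
  refine ne_top_of_le_ne_top ?_ (ENNReal.tsum_le_tsum hbound)
  rw [← ENNReal.ofReal_tsum_of_nonneg (fun _ => by positivity)
    ((summable_Hgt_rpow_neg hν).mul_left 6)]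
  exact ENNReal.ofReal_ne_top

lemma ae_of_ae_restrict_unitCube {n : ℕ} {p : (Fin n → ℝ) → Prop}
    (hp : ∀ (k : Fin n → ℤ) α, p (α + fun i => (k i : ℝ)) → p α)
    (h : ∀ᵐ α ∂volume.restrict (univ.pi fun _ : Fin n => Icc (0 : ℝ) 1), p α) :
    ∀ᵐ α, p α := by
  rw [ae_iff, Measure.restrict_apply' (MeasurableSet.univ_pi fun _ => measurableSet_Icc)] at h
  rw [ae_iff]
  refine measure_mono_null (t := ⋃ k : Fin n → ℤ, (· + fun i => (k i : ℝ)) ⁻¹'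
      ({α | ¬p α} ∩ univ.pi fun _ => Icc 0 1))
    (fun α hα => mem_iUnion.2 ⟨fun i => -⌊α i⌋, fun h => hα (hp _ _ h), fun i _ => ?_⟩)
    (measure_iUnion_null fun k => by rwa [measure_preimage_add_right])
  have : α i + ((-⌊α i⌋ : ℤ) : ℝ) = Int.fract (α i) := by push_cast; rw [Int.fract]; ring
  simp only [Pi.add_apply, this]
  exact ⟨Int.fract_nonneg _, (Int.fract_lt_one _).le⟩

lemma ae_forall_finite_approxSet (n : ℕ) :
    ∀ᵐ α : Fin n → ℝ, ∀ ν > (n : ℝ), (approxSet α ν).Finite := by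
  have h : ∀ᵐ α : Fin n → ℝ, ∀ q : ℕ, (approxSet α (n + 1 / (q + 1))).Finite :=
    ae_all_iff.2 fun q => ae_of_ae_restrict_unitCube
      (fun k α h => by rwa [approxSet_add_intCast] at h)
      (ae_restrict_unitCube_finite_approxSet (by simp; positivity))
  filter_upwards [h] with α hα ν hν
  obtain ⟨q, hq⟩ := exists_nat_one_div_lt (sub_pos.2 hν)
  exact (hα q).subset (approxSet_anti α (by linarith))

lemma exists_dnint_sum_le_inv_prod {ι : Type*} [Fintype ι] [Nonempty ι] (α : ι → ℝ)
    (b : ι → ℕ) (hb : ∀ i, 1 ≤ b i) :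
    ∃ x : ι → ℤ, x ≠ 0 ∧ (∀ i, (x i).natAbs ≤ b i) ∧
      dnint (∑ i, (x i : ℝ) * α i) ≤ ((∏ i, b i : ℕ) : ℝ)⁻¹ := by
  classical
  set N := ∏ i, b i
  have hN : (0 : ℝ) < N := by exact_mod_cast Finset.prod_pos fun i _ => hb i
  let D := Fintype.piFinset fun i => Finset.Icc (0 : ℤ) (b i)
  let f : (ι → ℤ) → ℤ := fun y => ⌊N * Int.fract (∑ i, (y i : ℝ) * α i)⌋
  have hcard : #(Finset.Ico (0 : ℤ) N) < #D := by
    simp only [D, Fintype.card_piFinset, Int.card_Icc, Int.card_Ico, sub_zero, Int.toNat_natCast]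
    exact_mod_cast Finset.prod_lt_prod_of_nonempty (fun i _ => hb i) (fun i _ => by omega)
      Finset.univ_nonempty
  have hmaps : ∀ y ∈ D, f y ∈ Finset.Ico (0 : ℤ) N := fun y _ => by
    have := Int.fract_lt_one (∑ i, (y i : ℝ) * α i)
    refine Finset.mem_Ico.2 ⟨Int.floor_nonneg.2 (by positivity), Int.floor_lt.2 ?_⟩
    push_cast
    nlinarith
  obtain ⟨y, hy, y', hy', hne, hf⟩ := Finset.exists_ne_map_eq_of_card_lt_of_maps_to hcard hmaps
  refine ⟨y - y', sub_ne_zero.2 hne, fun i => ?_, ?_⟩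
  · have hyi := Finset.mem_Icc.1 (Fintype.mem_piFinset.1 hy i)
    have hy'i := Finset.mem_Icc.1 (Fintype.mem_piFinset.1 hy' i)
    simp only [Pi.sub_apply]
    omega
  · set s := ∑ i, (y i : ℝ) * α i
    set s' := ∑ i, (y' i : ℝ) * α i
    have hsum : ∑ i, ((y - y') i : ℝ) * α i - ((⌊s⌋ - ⌊s'⌋ : ℤ) : ℝ) =
        Int.fract s - Int.fract s' := by
      simp only [Pi.sub_apply, Int.cast_sub, sub_mul, Finset.sum_sub_distrib, Int.fract, s, s']
      ring
    have hclose := Int.abs_sub_lt_one_of_floor_eq_floor hf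
    rw [← mul_sub, abs_mul, abs_of_pos hN] at hclose
    calc dnint (∑ i, ((y - y') i : ℝ) * α i) ≤ |Int.fract s - Int.fract s'| := by
          rw [← hsum]; exact dnint_le_abs_sub _ _
      _ ≤ (N : ℝ)⁻¹ := by
          rw [← one_div, le_div_iff₀' hN]; exact hclose.le

lemma inv_pow_le_rpow_neg {H Q s : ℝ} {a E : ℕ} (hH : 0 < H) (hQ : 1 ≤ Q) (hHQ : H ≤ Q ^ a)
    (hs : 0 ≤ s) (haE : a * s ≤ E) : (Q ^ E)⁻¹ ≤ H ^ (-s) := by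
  rw [Real.rpow_neg hH.le]
  refine inv_anti₀ (by positivity) ?_
  calc H ^ s ≤ (Q ^ a) ^ s := Real.rpow_le_rpow hH.le hHQ hs
    _ = Q ^ (a * s) := by rw [← Real.rpow_natCast, ← Real.rpow_mul (by positivity)]
    _ ≤ Q ^ (E : ℝ) := Real.rpow_le_rpow_of_exponent_le hQ haE
    _ = Q ^ E := Real.rpow_natCast Q E

lemma exists_cone_or_mem_approxSet {n ℓ : ℕ} (hn : 0 < n) (hℓn : ℓ ≤ n) (α : Fin n → ℝ)
    {q Q : ℕ} (hQ : 1 ≤ Q) {m : ℝ} (hm0 : 0 ≤ m) (hm : (q + 1) * m ≤ ℓ + q * n) :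
    ∃ x : Fin n → ℤ, dnint (∑ i, (x i : ℝ) * α i) ≤ ((Q : ℝ) ^ (ℓ + q * n))⁻¹ ∧
      ((cone ℓ x ∧ dnint (∑ i, (x i : ℝ) * α i) ≤ (Hgt x : ℝ) ^ (-m)) ∨
        x ∈ approxSet α ((ℓ + q * n : ℕ) / q)) := by
  classical
  have : Nonempty (Fin n) := ⟨⟨0, hn⟩⟩
  let b : Fin n → ℕ := fun i => Q ^ (q + if (i : ℕ) < ℓ then 1 else 0)
  have hprod : ∏ i, b i = Q ^ (ℓ + q * n) := by
    rw [Finset.prod_pow_eq_pow_sum, Finset.sum_add_distrib, Finset.sum_boole,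
      Fin.card_filter_val_lt, min_eq_right hℓn]
    simp [add_comm, mul_comm]
  obtain ⟨x, hx, hxb, hxd⟩ := exists_dnint_sum_le_inv_prod α b fun i => Nat.one_le_pow _ _ hQ
  have hH : (0 : ℝ) < Hgt x := by exact_mod_cast one_le_Hgt hx
  have hQR : (1 : ℝ) ≤ Q := by exact_mod_cast hQ
  rw [hprod, Nat.cast_pow] at hxd
  refine ⟨x, hxd, ?_⟩
  by_cases hc : cone ℓ x
  · refine .inl ⟨hc, hxd.trans
      (inv_pow_le_rpow_neg hH hQR (a := q + 1) ?_ hm0 (by push_cast; linarith))⟩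
    exact_mod_cast Hgt_le fun i => (hxb i).trans (Nat.pow_le_pow_right hQ (by split_ifs <;> omega))
  · refine .inr ⟨hx, hxd.trans (inv_pow_le_rpow_neg hH hQR (a := q) ?_ (by positivity) ?_)⟩
    · exact_mod_cast Hgt_le_of_not_cone hc fun i hi => (hxb i).trans_eq (by simp [b, not_lt.2 hi])
    · rcases Nat.eq_zero_or_pos q with rfl | hq
      · simp
      · rw [mul_div_cancel₀ _ (by positivity)]

lemma Set.infinite_of_forall_gt_exists_apply_lt {α β : Type*} [LinearOrder β] [NoMaxOrder β]
    {s : Set α} {f : α → β} {b : β} (hb : ∀ x ∈ s, b < f x) (h : ∀ c > b, ∃ x ∈ s, f x < c) :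
    s.Infinite := by
  intro hs
  obtain ⟨c, hc⟩ := exists_gt b
  obtain ⟨x, hx, -⟩ := h c hc
  obtain ⟨y, hy, hmin⟩ := Set.exists_min_image s f hs ⟨x, hx⟩
  obtain ⟨z, hz, hzy⟩ := h (f y) (hb y hy)
  exact (hmin z hz).not_gt hzy

lemma coneApproxSet_infinite {n ℓ : ℕ} (hℓ : 1 ≤ ℓ) (hℓn : ℓ ≤ n) {α : Fin n → ℝ}
    (hfin : ∀ ν > (n : ℝ), (approxSet α ν).Finite) {m : ℝ} (hm0 : 0 ≤ m) (hmn : m < n) :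
    (coneApproxSet ℓ α m).Infinite := by
  obtain ⟨q, hq⟩ := exists_nat_gt ((m - ℓ) / (n - m))
  have hm : ((q + 1 : ℕ) + 1) * m ≤ ℓ + (q + 1 : ℕ) * n := by
    rw [div_lt_iff₀ (sub_pos.2 hmn)] at hq
    push_cast
    nlinarith
  set ν : ℝ := (ℓ + (q + 1) * n : ℕ) / (q + 1 : ℕ)
  have hν : (n : ℝ) < ν := by
    rw [lt_div_iff₀ (by positivity)]
    push_cast
    nlinarith [(by exact_mod_cast hℓ : (1 : ℝ) ≤ ℓ)]
  have hF := hfin ν hν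
  have hunion : (coneApproxSet ℓ α m ∪ approxSet α ν).Infinite := by
    refine infinite_of_forall_gt_exists_apply_lt
      (f := fun x => dnint (∑ i, (x i : ℝ) * α i)) (b := 0) ?_ fun ε hε => ?_
    · rintro x (hx | hx)
      exacts [hx.2.1, dnint_pos_of_finite_approxSet hF hx.1]
    obtain ⟨Q, hQ⟩ := exists_nat_gt ε⁻¹
    have hQ0 : (0 : ℝ) < Q := (inv_pos.2 hε).trans hQ
    have hQ1 : 1 ≤ Q := Nat.cast_pos.1 hQ0
    obtain ⟨x, hxd, hx⟩ := exists_cone_or_mem_approxSet (by omega) hℓn α hQ1 hm0 hm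
    have hsmall : ((Q : ℝ) ^ (ℓ + (q + 1) * n))⁻¹ < ε :=
      (inv_anti₀ hQ0 (le_self_pow₀ (by exact_mod_cast hQ1) (by omega))).trans_lt
        (inv_lt_of_inv_lt₀ hε hQ)
    refine ⟨x, ?_, hxd.trans_lt hsmall⟩
    rcases hx with ⟨hc, hx⟩ | hx
    · exact .inl ⟨hc, dnint_pos_of_finite_approxSet hF (cone_ne_zero hc), hx⟩
    · exact .inr hx
  exact (infinite_union.1 hunion).resolve_right hF.not_infinite

lemma mu_eq_of_forall_finite_approxSet {n ℓ : ℕ} (hℓ : 1 ≤ ℓ) (hℓn : ℓ ≤ n) {α : Fin n → ℝ}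
    (hfin : ∀ ν > (n : ℝ), (approxSet α ν).Finite) : mu n ℓ α = n := by
  rw [mu_eq_sSup_coneApproxSet]
  have hn : (0 : ℝ) < n := by exact_mod_cast (by omega : 0 < n)
  have hmem : ∀ m : ℝ, 0 ≤ m → m < n → 0 ≤ m ∧ (coneApproxSet ℓ α m).Infinite :=
    fun m h0 h1 => ⟨h0, coneApproxSet_infinite hℓ hℓn hfin h0 h1⟩
  refine csSup_eq_of_forall_le_of_forall_lt_exists_gt ⟨0, hmem 0 le_rfl hn⟩ ?_ fun w hw => ?_
  · rintro m ⟨-, hinf⟩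
    by_contra! h
    exact hinf ((hfin m h).subset (coneApproxSet_subset_approxSet α m))
  · exact ⟨(max w 0 + n) / 2, hmem _ (by positivity) (by linarith [max_lt hw hn]),
      by linarith [le_max_left w 0]⟩

theorem mu_ae_eq_n (n ℓ : ℕ) (hℓ : 1 ≤ ℓ) (hn : ℓ ≤ n) :
    ∀ᵐ α ∂(volume : Measure (Fin n → ℝ)), mu n ℓ α = n := by
  filter_upwards [ae_forall_finite_approxSet n] with α hα
  exact mu_eq_of_forall_finite_approxSet hℓ hn hα
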